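/- Define the affine connection ∇_x y = (1/2)[x,y]_m + U(x,y) on diff_0(S^1). Then for n > m: ∇_{f_m} f_n = λ_{m,n} g_{n+m}, ∇_{f_m} g_n = -λ_{m,n} f_{n+m}, ∇_{g_m} g_n = -λ_{m,n} g_{n+m}; for n < m: ∇_{f_m} f_n = λ_{m,n} g_{n+m} + ((n+m)/2) g_{m-n}, ∇_{f_m} g_n = -λ_{m,n} f_{n+m} + ((m+n)/2) f_{m-n}, ∇_{g_m} g_n = ((n+m)/2) g_{m-n} - λ_{m,n} g_{n+m}; and ∇_{f_n} f_n = λ_{n,n} g_{2n}, ∇_{f_n} g_n = -λ_{n,n} f_{2n}, ∇_{g_n} g_n = -λ_{n,n} g_{2n}. -/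
import Mathlib


/-- index type for the basis `{f_{k+1}} ∪ {g_{k+1}}` of `diff_0(S¹)`:
`Sum.inl k` stands for `f_{k+1} = cos((k+1)t)`, `Sum.inr k` for `g_{k+1} = sin((k+1)t)`. -/
abbrev Idx := ℕ ⊕ ℕ

/-- `diff_0(S¹)`, modelled as the free vector space on the basis `{f_k, g_k : k ≥ 1}`. -/
abbrev V := Idx →₀ ℝ

/-- `f_k = cos(kt)` as an element of `diff_0(S¹)` (with `f_0` projected to `0`). -/
noncomputable def Fb : ℕ → V := fun k =>
  if k = 0 then 0 else Finsupp.single (Sum.inl (k - 1)) 1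

/-- `g_k = sin(kt)` as an element of `diff_0(S¹)` (with `g_0 = 0`). -/
noncomputable def Gb : ℕ → V := fun k =>
  if k = 0 then 0 else Finsupp.single (Sum.inr (k - 1)) 1

/-- `θ_k = 2hk + (c/12)(k³ - k)` -/
noncomputable def th (c h : ℝ) (k : ℤ) : ℝ := 2 * h * k + c / 12 * ((k : ℝ) ^ 3 - k)

/-- `λ_{m,n} = (2n+m)θ_m / (2θ_{m+n})` -/
noncomputable def lam (c h : ℝ) (m n : ℤ) : ℝ :=
  (2 * (n : ℝ) + m) * th c h m / (2 * th c h (m + n))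

/-- `|M - N|` for natural numbers -/
def dN (M N : ℕ) : ℕ := max M N - min M N

/-- `sign (M - N)` -/
noncomputable def sg (M N : ℕ) : ℝ := if N < M then 1 else -1

/-- the projected bracket `[·,·]_m` on basis elements, given by
`[f_M, f_N]_m = ((M-N)/2) g_{M+N} + ((M+N)/2) sign(M-N) g_{|M-N|}`,
`[g_M, g_N]_m = ((N-M)/2) g_{M+N} + ((M+N)/2) sign(M-N) g_{|M-N|}`,
`[f_M, g_N]_m = ((N-M)/2) f_{M+N} + ((M+N)/2) f_{|M-N|}` (the `f_0` term being projected away),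
and `[g_M, f_N]_m = -[f_N, g_M]_m`. -/
noncomputable def brB : Idx → Idx → V
  | Sum.inl m, Sum.inl n =>
      (((m : ℝ) - n) / 2) • Gb (m + n + 2)
        + (((m : ℝ) + n + 2) / 2 * sg (m + 1) (n + 1)) • Gb (dN (m + 1) (n + 1))
  | Sum.inl m, Sum.inr n =>
      (((n : ℝ) - m) / 2) • Fb (m + n + 2)
        + (((m : ℝ) + n + 2) / 2) • Fb (dN (m + 1) (n + 1))
  | Sum.inr m, Sum.inl n =>
      -((((m : ℝ) - n) / 2) • Fb (m + n + 2)
        + (((m : ℝ) + n + 2) / 2) • Fb (dN (m + 1) (n + 1)))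
  | Sum.inr m, Sum.inr n =>
      (((n : ℝ) - m) / 2) • Gb (m + n + 2)
        + (((m : ℝ) + n + 2) / 2 * sg (m + 1) (n + 1)) • Gb (dN (m + 1) (n + 1))

/-- bilinear extension of a map given on basis elements -/
noncomputable def bil (φ : Idx → Idx → V) (x y : V) : V :=
  x.sum fun i a => y.sum fun j b => (a * b) • φ i j

/-- the projected (mean-zero) bracket `[·,·]_m` on `diff_0(S¹)` -/
noncomputable def brm : V → V → V := bil brB

/-- the inner product `B` on basis elements: `B(f_M, f_N) = B(g_M, g_N) = (θ_M/2)δ_{M,N}`,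
`B(f_M, g_N) = 0`. -/
noncomputable def ipB (c h : ℝ) : Idx → Idx → ℝ
  | Sum.inl m, Sum.inl n => if m = n then th c h (m + 1) / 2 else 0
  | Sum.inr m, Sum.inr n => if m = n then th c h (m + 1) / 2 else 0
  | _, _ => 0

/-- the inner product `B(f,g) = ω_{c,h}(f, Jg)` on `diff_0(S¹)` -/
noncomputable def Bf (c h : ℝ) (x y : V) : ℝ :=
  x.sum fun i a => y.sum fun j b => a * b * ipB c h i j

lemma Bf_zero_left (c h : ℝ) (y : V) : Bf c h 0 y = 0 := by
  simp [Bf]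

lemma Bf_add_left (c h : ℝ) (x x' y : V) :
    Bf c h (x + x') y = Bf c h x y + Bf c h x' y := by
  unfold Bf
  rw [Finsupp.sum_add_index]
  · intro i _; simp [Finsupp.sum]
  · intro i _ a a'; simp [Finsupp.sum, add_mul, Finset.sum_add_distrib]

lemma Bf_smul_left (c h : ℝ) (r : ℝ) (x y : V) :
    Bf c h (r • x) y = r * Bf c h x y := by
  unfold Bf
  rw [Finsupp.sum_smul_index]
  · simp [Finsupp.sum, Finset.mul_sum, mul_assoc]
  · intro i; simp [Finsupp.sum]

lemma Bf_zero_right (c h : ℝ) (x : V) : Bf c h x 0 = 0 := by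
  simp [Bf]

lemma Bf_add_right (c h : ℝ) (x y y' : V) :
    Bf c h x (y + y') = Bf c h x y + Bf c h x y' := by
  unfold Bf
  rw [← Finsupp.sum_add]
  apply Finsupp.sum_congr
  intro i _
  rw [Finsupp.sum_add_index]
  · intro j _; simp
  · intro j _ b b'; ring

lemma Bf_smul_right (c h : ℝ) (r : ℝ) (x y : V) :
    Bf c h x (r • y) = r * Bf c h x y := by
  unfold Bf
  rw [Finsupp.mul_sum]
  apply Finsupp.sum_congr
  intro i _
  rw [Finsupp.sum_smul_index (by intro j; ring)]
  rw [Finsupp.mul_sum]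
  apply Finsupp.sum_congr
  intro j _
  ring

lemma Bf_neg_left (c h : ℝ) (x y : V) : Bf c h (-x) y = -Bf c h x y := by
  have := Bf_smul_left c h (-1) x y; simpa using this

lemma Bf_single_single (c h : ℝ) (i j : Idx) (a b : ℝ) :
    Bf c h (Finsupp.single i a) (Finsupp.single j b) = a * b * ipB c h i j := by
  unfold Bf
  rw [Finsupp.sum_single_index, Finsupp.sum_single_index]
  · simp
  · simp [Finsupp.sum]

lemma brm_single_single (i j : Idx) (a b : ℝ) :
    brm (Finsupp.single i a) (Finsupp.single j b) = (a * b) • brB i j := by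
  unfold brm bil
  rw [Finsupp.sum_single_index, Finsupp.sum_single_index]
  · simp
  · simp [Finsupp.sum]

lemma th_pos {c h : ℝ} (hc : 0 < c) (hh : 0 < h) {k : ℤ} (hk : 1 ≤ k) :
    0 < th c h k := by
  have h1 : (1 : ℝ) ≤ (k : ℝ) := by exact_mod_cast hk
  have h2 : (0:ℝ) < (k:ℝ) := by linarith
  have hk2 : (1:ℝ) ≤ (k:ℝ)^2 := by nlinarith
  have h3 : (0:ℝ) ≤ (k:ℝ)^3 - k := by nlinarith
  unfold th
  nlinarith [mul_pos hh h2, mul_nonneg hc.le h3]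

def deg : Idx → ℤ
  | Sum.inl k => k
  | Sum.inr k => k

@[simp] lemma deg_inl (k : ℕ) : deg (Sum.inl k) = k := rfl
@[simp] lemma deg_inr (k : ℕ) : deg (Sum.inr k) = k := rfl

lemma Bf_single_coord (c h : ℝ) (u : V) (i : Idx) :
    Bf c h u (Finsupp.single i 1) =
      u i * (th c h ((deg i) + 1) / 2) := by
  unfold Bf
  have : ∀ j : Idx, ∀ a : ℝ,
      (Finsupp.single i (1:ℝ)).sum (fun j' b => a * b * ipB c h j j') =
        a * ipB c h j i := by
    intro j a
    rw [Finsupp.sum_single_index] <;> simp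
  simp only [this]
  have hip : ∀ j : Idx, ipB c h j i =
      if j = i then th c h ((deg i) + 1) / 2 else 0 := by
    intro j
    rcases j with j | j <;> rcases i with i | i <;>
      simp [ipB, Sum.inl.injEq, Sum.inr.injEq] <;>
      split_ifs with hji <;> simp_all [deg]
  simp only [hip, mul_ite, mul_zero]
  rw [Finsupp.sum_ite_eq']
  split_ifs with hi
  · rfl
  · rw [Finsupp.notMem_support_iff.mp hi, zero_mul]

lemma Bf_ext {c h : ℝ} (hc : 0 < c) (hh : 0 < h) {u v : V}
    (H : ∀ i, Bf c h u (Finsupp.single i 1) = Bf c h v (Finsupp.single i 1)) : u = v := by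
  ext i
  have := H i
  rw [Bf_single_coord, Bf_single_coord] at this
  have hθ : 0 < th c h ((deg i) + 1) := by
    apply th_pos hc hh
    rcases i with k | k <;> simp
  have h2 : th c h ((deg i) + 1) / 2 ≠ 0 := ne_of_gt (by positivity)
  exact mul_right_cancel₀ h2 this

@[simp] lemma Fb_succ (k : ℕ) : Fb (k+1) = Finsupp.single (Sum.inl k) 1 := by simp [Fb]
@[simp] lemma Gb_succ (k : ℕ) : Gb (k+1) = Finsupp.single (Sum.inr k) 1 := by simp [Gb]

lemma Bf_Gb_inr (c h : ℝ) (p k : ℕ) :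
    Bf c h (Gb p) (Finsupp.single (Sum.inr k) 1) =
      if p = k + 1 then th c h ((k:ℤ)+1)/2 else 0 := by
  unfold Gb
  split_ifs with h0 h1 h1
  · exfalso; omega
  · exact Bf_zero_left c h _
  · subst h1; simp [Bf_single_single, ipB]
  · simp [Bf_single_single, ipB, show p - 1 ≠ k by omega]

lemma Bf_Gb_inl (c h : ℝ) (p k : ℕ) :
    Bf c h (Gb p) (Finsupp.single (Sum.inl k) 1) = 0 := by
  unfold Gb
  split_ifs with h0
  · exact Bf_zero_left c h _
  · simp [Bf_single_single, ipB]

lemma Bf_Fb_inl (c h : ℝ) (p k : ℕ) :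
    Bf c h (Fb p) (Finsupp.single (Sum.inl k) 1) =
      if p = k + 1 then th c h ((k:ℤ)+1)/2 else 0 := by
  unfold Fb
  split_ifs with h0 h1 h1
  · exfalso; omega
  · exact Bf_zero_left c h _
  · subst h1; simp [Bf_single_single, ipB]
  · simp [Bf_single_single, ipB, show p - 1 ≠ k by omega]

lemma Bf_Fb_inr (c h : ℝ) (p k : ℕ) :
    Bf c h (Fb p) (Finsupp.single (Sum.inr k) 1) = 0 := by
  unfold Fb
  split_ifs with h0
  · exact Bf_zero_left c h _
  · simp [Bf_single_single, ipB]

lemma Bf_inr_Gb (c h : ℝ) (p k : ℕ) :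
    Bf c h (Finsupp.single (Sum.inr k) 1) (Gb p) =
      if p = k + 1 then th c h ((k:ℤ)+1)/2 else 0 := by
  unfold Gb
  split_ifs with h0 h1 h1
  · exfalso; omega
  · exact Bf_zero_right c h _
  · subst h1; simp [Bf_single_single, ipB]
  · simp [Bf_single_single, ipB, show k ≠ p - 1 by omega]

lemma Bf_inl_Gb (c h : ℝ) (p k : ℕ) :
    Bf c h (Finsupp.single (Sum.inl k) 1) (Gb p) = 0 := by
  unfold Gb
  split_ifs with h0
  · exact Bf_zero_right c h _
  · simp [Bf_single_single, ipB]

lemma Bf_inl_Fb (c h : ℝ) (p k : ℕ) :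
    Bf c h (Finsupp.single (Sum.inl k) 1) (Fb p) =
      if p = k + 1 then th c h ((k:ℤ)+1)/2 else 0 := by
  unfold Fb
  split_ifs with h0 h1 h1
  · exfalso; omega
  · exact Bf_zero_right c h _
  · subst h1; simp [Bf_single_single, ipB]
  · simp [Bf_single_single, ipB, show k ≠ p - 1 by omega]

lemma Bf_inr_Fb (c h : ℝ) (p k : ℕ) :
    Bf c h (Finsupp.single (Sum.inr k) 1) (Fb p) = 0 := by
  unfold Fb
  split_ifs with h0
  · exact Bf_zero_right c h _
  · simp [Bf_single_single, ipB]

lemma Bf_neg_right (c h : ℝ) (x y : V) : Bf c h x (-y) = -Bf c h x y := by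
  have := Bf_smul_right c h (-1) x y; simpa using this

set_option maxHeartbeats 2000000 in
lemma Dff (c h : ℝ) (hc : 0 < c) (hh : 0 < h) (U : V → V → V)
    (hU : ∀ x y z : V,
      Bf c h (U x y) z = (1/2) * (Bf c h (brm x z) y + Bf c h x (brm y z)))
    (D : V → V → V)
    (hD : ∀ x y : V, D x y = (1/2 : ℝ) • brm x y + U x y)
    (M N : ℕ) :
    D (Fb (M+1)) (Fb (N+1)) =
      lam c h ((M:ℤ)+1) ((N:ℤ)+1) • Gb (M+N+2)
        + (((M:ℝ)+N+2)/4 * (sg (M+1) (N+1) + 1)) • Gb (dN (M+1) (N+1)) := by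
  have hθ : th c h (((M:ℤ)+1) + ((N:ℤ)+1)) ≠ 0 :=
    ne_of_gt (th_pos hc hh (by omega))
  apply Bf_ext hc hh
  intro i
  rw [hD, Bf_add_left, Bf_smul_left, hU]
  simp only [Fb_succ]
  rcases i with k | k
  · simp only [brm_single_single, one_mul, one_smul, brB,
      Bf_add_left, Bf_add_right, Bf_smul_left, Bf_smul_right,
      Bf_neg_left, Bf_neg_right,
      Bf_Gb_inl, Bf_Gb_inr, Bf_Fb_inl, Bf_Fb_inr,
      Bf_inl_Gb, Bf_inl_Fb, Bf_inr_Gb, Bf_inr_Fb]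
    ring
  · simp only [brm_single_single, one_mul, one_smul, brB,
      Bf_add_left, Bf_add_right, Bf_smul_left, Bf_smul_right,
      Bf_neg_left, Bf_neg_right,
      Bf_Gb_inl, Bf_Gb_inr, Bf_Fb_inl, Bf_Fb_inr,
      Bf_inl_Gb, Bf_inl_Fb, Bf_inr_Gb, Bf_inr_Fb, sg]
    split_ifs <;>
        (try (exfalso; simp only [dN] at *; omega)) <;>
        simp only [dN] at *
    · obtain rfl : k = M + N + 1 := by omega
      simp only [lam]; field_simp [hθ]; simp only [th]; push_cast; ring
    · obtain rfl : k = M + N + 1 := by omega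
      simp only [lam]; field_simp [hθ]; simp only [th]; push_cast; ring
    · obtain rfl : M = k + N + 1 := by omega
      simp only [lam, th]; push_cast; ring
    · ring
    · obtain rfl : N = k + M + 1 := by omega
      simp only [lam, th]; push_cast; ring
    · ring

set_option maxHeartbeats 2000000 in
lemma Dfg (c h : ℝ) (hc : 0 < c) (hh : 0 < h) (U : V → V → V)
    (hU : ∀ x y z : V,
      Bf c h (U x y) z = (1/2) * (Bf c h (brm x z) y + Bf c h x (brm y z)))
    (D : V → V → V)
    (hD : ∀ x y : V, D x y = (1/2 : ℝ) • brm x y + U x y)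
    (M N : ℕ) :
    D (Fb (M+1)) (Gb (N+1)) =
      (-lam c h ((M:ℤ)+1) ((N:ℤ)+1)) • Fb (M+N+2)
        + (((M:ℝ)+N+2)/4 * (sg (M+1) (N+1) + 1)) • Fb (dN (M+1) (N+1)) := by
  have hθ : th c h (((M:ℤ)+1) + ((N:ℤ)+1)) ≠ 0 :=
    ne_of_gt (th_pos hc hh (by omega))
  apply Bf_ext hc hh
  intro i
  rw [hD, Bf_add_left, Bf_smul_left, hU, Fb_succ M, Gb_succ N]
  rcases i with k | k
  · simp only [brm_single_single, one_mul, one_smul, brB,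
      Bf_add_left, Bf_add_right, Bf_smul_left, Bf_smul_right,
      Bf_neg_left, Bf_neg_right,
      Bf_Gb_inl, Bf_Gb_inr, Bf_Fb_inl, Bf_Fb_inr,
      Bf_inl_Gb, Bf_inl_Fb, Bf_inr_Gb, Bf_inr_Fb, sg]
    split_ifs <;>
        (try (exfalso; simp only [dN] at *; omega)) <;>
        simp only [dN] at *
    · obtain rfl : k = M + N + 1 := by omega
      simp only [lam]; field_simp [hθ]; simp only [th]; push_cast; ring
    · obtain rfl : k = M + N + 1 := by omega
      simp only [lam]; field_simp [hθ]; simp only [th]; push_cast; ring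
    · obtain rfl : N = M + k + 1 := by omega
      simp only [lam, th]; push_cast; ring
    · obtain rfl : N = M + k + 1 := by omega
      simp only [lam, th]; push_cast; ring
    · obtain rfl : M = N + k + 1 := by omega
      simp only [lam, th]; push_cast; ring
    all_goals ring
  · simp only [brm_single_single, one_mul, one_smul, brB,
      Bf_add_left, Bf_add_right, Bf_smul_left, Bf_smul_right,
      Bf_neg_left, Bf_neg_right,
      Bf_Gb_inl, Bf_Gb_inr, Bf_Fb_inl, Bf_Fb_inr,
      Bf_inl_Gb, Bf_inl_Fb, Bf_inr_Gb, Bf_inr_Fb, sg]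
    ring

set_option maxHeartbeats 2000000 in
lemma Dgg (c h : ℝ) (hc : 0 < c) (hh : 0 < h) (U : V → V → V)
    (hU : ∀ x y z : V,
      Bf c h (U x y) z = (1/2) * (Bf c h (brm x z) y + Bf c h x (brm y z)))
    (D : V → V → V)
    (hD : ∀ x y : V, D x y = (1/2 : ℝ) • brm x y + U x y)
    (M N : ℕ) :
    D (Gb (M+1)) (Gb (N+1)) =
      (-lam c h ((M:ℤ)+1) ((N:ℤ)+1)) • Gb (M+N+2)
        + (((M:ℝ)+N+2)/4 * (sg (M+1) (N+1) + 1)) • Gb (dN (M+1) (N+1)) := by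
  have hθ : th c h (((M:ℤ)+1) + ((N:ℤ)+1)) ≠ 0 :=
    ne_of_gt (th_pos hc hh (by omega))
  apply Bf_ext hc hh
  intro i
  rw [hD, Bf_add_left, Bf_smul_left, hU, Gb_succ M, Gb_succ N]
  rcases i with k | k
  · simp only [brm_single_single, one_mul, one_smul, brB,
      Bf_add_left, Bf_add_right, Bf_smul_left, Bf_smul_right,
      Bf_neg_left, Bf_neg_right,
      Bf_Gb_inl, Bf_Gb_inr, Bf_Fb_inl, Bf_Fb_inr,
      Bf_inl_Gb, Bf_inl_Fb, Bf_inr_Gb, Bf_inr_Fb, sg]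
    ring
  · simp only [brm_single_single, one_mul, one_smul, brB,
      Bf_add_left, Bf_add_right, Bf_smul_left, Bf_smul_right,
      Bf_neg_left, Bf_neg_right,
      Bf_Gb_inl, Bf_Gb_inr, Bf_Fb_inl, Bf_Fb_inr,
      Bf_inl_Gb, Bf_inl_Fb, Bf_inr_Gb, Bf_inr_Fb, sg]
    split_ifs <;>
        (try (exfalso; simp only [dN] at *; omega)) <;>
        simp only [dN] at *
    · obtain rfl : k = M + N + 1 := by omega
      simp only [lam]; field_simp [hθ]; simp only [th]; push_cast; ring
    · obtain rfl : k = M + N + 1 := by omega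
      simp only [lam]; field_simp [hθ]; simp only [th]; push_cast; ring
    · obtain rfl : M = N + k + 1 := by omega
      simp only [lam, th]; push_cast; ring
    · obtain rfl : M = N + k + 1 := by omega
      simp only [lam, th]; push_cast; ring
    · ring
    · ring
    · ring
    · obtain rfl : N = M + k + 1 := by omega
      simp only [lam, th]; push_cast; ring
    · obtain rfl : N = M + k + 1 := by omega
      simp only [lam, th]; push_cast; ring
    all_goals ring

set_option maxHeartbeats 1000000 in
/-- For the affine connection `∇_x y = (1/2)[x,y]_m + U(x,y)` one has the explicit values
of Proposition `P:nabla` on the basis `f_m, g_n`. -/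
theorem nabla_values (c h : ℝ) (hc : 0 < c) (hh : 0 < h) (U : V → V → V)
    (hU : ∀ x y z : V,
      Bf c h (U x y) z = (1/2) * (Bf c h (brm x z) y + Bf c h x (brm y z)))
    (D : V → V → V)
    (hD : ∀ x y : V, D x y = (1/2 : ℝ) • brm x y + U x y)
    (m n : ℕ) (hm : 1 ≤ m) (hn : 1 ≤ n) :
    (m < n → D (Fb m) (Fb n) = lam c h m n • Gb (n + m)) ∧
    (n < m → D (Fb m) (Fb n) = lam c h m n • Gb (n + m) + (((n : ℝ) + m) / 2) • Gb (m - n)) ∧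
    (D (Fb n) (Fb n) = lam c h n n • Gb (2 * n)) ∧
    (m < n → D (Fb m) (Gb n) = (-lam c h m n) • Fb (n + m)) ∧
    (n < m → D (Fb m) (Gb n) = (-lam c h m n) • Fb (n + m) + (((m : ℝ) + n) / 2) • Fb (m - n)) ∧
    (D (Fb n) (Gb n) = (-lam c h n n) • Fb (2 * n)) ∧
    (m < n → D (Gb m) (Gb n) = (-lam c h m n) • Gb (n + m)) ∧
    (n < m → D (Gb m) (Gb n) = (((n : ℝ) + m) / 2) • Gb (m - n) + (-lam c h m n) • Gb (n + m)) ∧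
    (D (Gb n) (Gb n) = (-lam c h n n) • Gb (2 * n)) := by
  obtain ⟨M, rfl⟩ : ∃ M, m = M + 1 := ⟨m - 1, by omega⟩
  obtain ⟨N, rfl⟩ : ∃ N, n = N + 1 := ⟨n - 1, by omega⟩
  have e1 : N + 1 + (M + 1) = M + N + 2 := by omega
  have e2 : 2 * (N + 1) = N + N + 2 := by omega
  refine ⟨?_, ?_, ?_, ?_, ?_, ?_, ?_, ?_, ?_⟩
  · intro hlt
    rw [Dff c h hc hh U hU D hD M N, e1]
    have hsg : sg (M+1) (N+1) = -1 := by simp [sg]; omega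
    rw [hsg]
    push_cast
    ring_nf
    simp
  · intro hlt
    rw [Dff c h hc hh U hU D hD M N, e1]
    have hsg : sg (M+1) (N+1) = 1 := by simp [sg]; omega
    have hdn : dN (M+1) (N+1) = M + 1 - (N + 1) := by simp [dN]; omega
    rw [hsg, hdn]
    push_cast [show N + 1 ≤ M + 1 by omega]
    ring_nf
  · rw [Dff c h hc hh U hU D hD N N, e2]
    have hsg : sg (N+1) (N+1) = -1 := by simp [sg]
    rw [hsg]
    push_cast
    ring_nf
    simp
  · intro hlt
    rw [Dfg c h hc hh U hU D hD M N, e1]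
    have hsg : sg (M+1) (N+1) = -1 := by simp [sg]; omega
    rw [hsg]
    push_cast
    ring_nf
    simp
  · intro hlt
    rw [Dfg c h hc hh U hU D hD M N, e1]
    have hsg : sg (M+1) (N+1) = 1 := by simp [sg]; omega
    have hdn : dN (M+1) (N+1) = M + 1 - (N + 1) := by simp [dN]; omega
    rw [hsg, hdn]
    push_cast [show N + 1 ≤ M + 1 by omega]
    ring_nf
  · rw [Dfg c h hc hh U hU D hD N N, e2]
    have hsg : sg (N+1) (N+1) = -1 := by simp [sg]
    rw [hsg]
    push_cast
    ring_nf
    simp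
  · intro hlt
    rw [Dgg c h hc hh U hU D hD M N, e1]
    have hsg : sg (M+1) (N+1) = -1 := by simp [sg]; omega
    rw [hsg]
    push_cast
    ring_nf
    simp
  · intro hlt
    rw [Dgg c h hc hh U hU D hD M N, e1]
    have hsg : sg (M+1) (N+1) = 1 := by simp [sg]; omega
    have hdn : dN (M+1) (N+1) = M + 1 - (N + 1) := by simp [dN]; omega
    rw [hsg, hdn]
    push_cast [show N + 1 ≤ M + 1 by omega]
    ring_nf
    exact add_comm _ _
  · rw [Dgg c h hc hh U hU D hD N N, e2]
    have hsg : sg (N+1) (N+1) = -1 := by simp [sg]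
    rw [hsg]
    push_cast
    ring_nf
    simp
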